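/- arXiv:0912.4884 — 2 statements merged into one kernel-verified Lean document; each statement's English description precedes it below -/
import Mathlib

section
/- Let B be a random variable in R^k and g : [0,1] -> [0,1] a function such that for all lambda in [0,1] and all theta in R^k, P(B in Rect(theta + lambda*1) \ Rect(theta)) <= g(lambda). Let A be a random variable in R^k such that for every theta in R^k and lambda in (0,1) there exist functions psi_upper, psi_lower : R^k -> [0,1] with: psi_upper = 1 on Rect(theta), psi_upper = 0 outside Rect(theta + lambda*1), psi_lower = 1 on Rect(theta - lambda*1), psi_lower = 0 outside Rect(theta), and |E[psi(A)] - E[psi(B)]| <= D(lambda) for psi in {psi_upper, psi_lower}. Then for all theta in R^k and lambda in (0,1), |P(A in Rect(theta)) - P(B in Rect(theta))| <= D(lambda) + g(lambda). -/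
/-!
Since `ψu` and `ψl` lie between the indicators of `Rect (θ - λ)`, `Rect θ` and
`Rect (θ + λ)`, `P(A ∈ Rect θ)` is within `D λ` of `P(B ∈ Rect (θ ± λ))`, and
anti-concentration of `B` says these differ from `P(B ∈ Rect θ)` by at most `g λ`.
-/

open MeasureTheory

/-- `Rect θ` is the set `(-∞, θ 1] × ⋯ × (-∞, θ k]`. -/
def Rect {k : ℕ} (θ : Fin k → ℝ) : Set (Fin k → ℝ) := {a | ∀ l, a l ≤ θ l}

theorem measurableSet_rect {k : ℕ} (θ : Fin k → ℝ) : MeasurableSet (Rect θ) := by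
  simp only [Rect, Set.ofPred_forall]
  exact .iInter fun l => measurableSet_le (measurable_pi_apply l) measurable_const

section

variable {Ω E : Type*} [MeasurableSpace Ω] {μ : Measure Ω} [IsFiniteMeasure μ]

theorem measureReal_le_add_sdiff (X : Ω → E) (s t : Set E) :
    μ.real {ω | X ω ∈ t} ≤ μ.real {ω | X ω ∈ t \ s} + μ.real {ω | X ω ∈ s} :=
  (measureReal_mono fun ω hω => by by_cases X ω ∈ s <;> simp_all).trans
    (measureReal_union_le _ _)

variable [MeasurableSpace E] {X : Ω → E} {ψ : E → ℝ}

theorem integrable_comp_of_mem_Icc (hX : Measurable X) (hψ : Measurable ψ)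
    (hψ01 : ∀ a, ψ a ∈ Set.Icc (0 : ℝ) 1) : Integrable (fun ω => ψ (X ω)) μ :=
  .of_bound (hψ.comp hX).aestronglyMeasurable 1 <| .of_forall fun ω => by
    rw [Real.norm_of_nonneg (hψ01 _).1]
    exact (hψ01 _).2

theorem measureReal_preimage_le_integral_comp (hX : Measurable X)
    (hψ : Measurable ψ) (hψ01 : ∀ a, ψ a ∈ Set.Icc (0 : ℝ) 1) {S : Set E}
    (hS : ∀ a ∈ S, ψ a = 1) : μ.real {ω | X ω ∈ S} ≤ ∫ ω, ψ (X ω) ∂μ :=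
  calc μ.real {ω | X ω ∈ S} ≤ μ.real {ω | 1 ≤ ψ (X ω)} :=
        measureReal_mono fun ω hω => (hS _ hω).ge
    _ ≤ ∫ ω, ψ (X ω) ∂μ := by
        simpa using mul_meas_ge_le_integral_of_nonneg (.of_forall fun ω => (hψ01 (X ω)).1)
          (integrable_comp_of_mem_Icc hX hψ hψ01) 1

theorem integral_comp_le_measureReal_preimage (hX : Measurable X)
    (hψ : Measurable ψ) (hψ01 : ∀ a, ψ a ∈ Set.Icc (0 : ℝ) 1) {T : Set E}
    (hT : MeasurableSet T) (hT' : ∀ a ∉ T, ψ a = 0) : ∫ ω, ψ (X ω) ∂μ ≤ μ.real {ω | X ω ∈ T} := by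
  refine (integral_mono (integrable_comp_of_mem_Icc hX hψ hψ01)
    ((integrable_const 1).indicator (hX hT)) fun ω => ?_).trans_eq
    (integral_indicator_one (hX hT))
  by_cases hω : X ω ∈ T
  · simpa [Set.indicator_of_mem (show ω ∈ X ⁻¹' T from hω)] using (hψ01 _).2
  · simp [Set.indicator_of_notMem (show ω ∉ X ⁻¹' T from hω), hT' _ hω]

end

theorem stmt_6 {Ω : Type*} [MeasurableSpace Ω] (μ : Measure Ω) [IsProbabilityMeasure μ]
    (k : ℕ) (A B : Ω → Fin k → ℝ) (hA : Measurable A) (hB : Measurable B)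
    (g : ℝ → ℝ) (D : ℝ → ℝ)
    (hg : ∀ lam ∈ Set.Icc (0:ℝ) 1, ∀ θ : Fin k → ℝ,
      (μ {ω | B ω ∈ Rect (fun l => θ l + lam) \ Rect θ}).toReal ≤ g lam)
    (hsandwich : ∀ (θ : Fin k → ℝ), ∀ lam ∈ Set.Ioo (0:ℝ) 1,
      ∃ ψu ψl : (Fin k → ℝ) → ℝ,
        Measurable ψu ∧ Measurable ψl ∧
        (∀ a, ψu a ∈ Set.Icc (0:ℝ) 1) ∧ (∀ a, ψl a ∈ Set.Icc (0:ℝ) 1) ∧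
        (∀ a ∈ Rect θ, ψu a = 1) ∧
        (∀ a ∉ Rect (fun l => θ l + lam), ψu a = 0) ∧
        (∀ a ∈ Rect (fun l => θ l - lam), ψl a = 1) ∧
        (∀ a ∉ Rect θ, ψl a = 0) ∧
        |(∫ ω, ψu (A ω) ∂μ) - ∫ ω, ψu (B ω) ∂μ| ≤ D lam ∧
        |(∫ ω, ψl (A ω) ∂μ) - ∫ ω, ψl (B ω) ∂μ| ≤ D lam) :
    ∀ (θ : Fin k → ℝ), ∀ lam ∈ Set.Ioo (0:ℝ) 1,
      |(μ {ω | A ω ∈ Rect θ}).toReal - (μ {ω | B ω ∈ Rect θ}).toReal| ≤ D lam + g lam := by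
  intro θ lam hlam
  obtain ⟨ψu, ψl, hψu, hψl, hψu01, hψl01, hu1, hu0, hl1, hl0, hDu, hDl⟩ :=
    hsandwich θ lam hlam
  have hgB := fun θ' => hg lam (Set.Ioo_subset_Icc_self hlam) θ'
  simp only [← measureReal_def] at hgB ⊢
  have hg_up := hgB θ
  have hg_low : μ.real {ω | B ω ∈ Rect θ \ Rect (fun l => θ l - lam)} ≤ g lam := by
    simpa only [sub_add_cancel] using hgB (fun l => θ l - lam)
  have hB_up := measureReal_le_add_sdiff (μ := μ) B (Rect θ) (Rect (fun l => θ l + lam))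
  have hB_low := measureReal_le_add_sdiff (μ := μ) B (Rect (fun l => θ l - lam)) (Rect θ)
  have hψuA := measureReal_preimage_le_integral_comp (μ := μ) hA hψu hψu01 hu1
  have hψuB :=
    integral_comp_le_measureReal_preimage (μ := μ) hB hψu hψu01 (measurableSet_rect _) hu0
  have hψlB := measureReal_preimage_le_integral_comp (μ := μ) hB hψl hψl01 hl1
  have hψlA :=
    integral_comp_le_measureReal_preimage (μ := μ) hA hψl hψl01 (measurableSet_rect _) hl0
  rw [abs_le] at hDu hDl
  rw [abs_sub_le_iff]
  constructor <;> linarith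
end

section
/- Let X be uniform on {-1,1}^n and, given X, let Z be the delta-perturbation of X (each coordinate independently flipped with probability delta). Let W in R^{n x k} have unit-norm columns, each eps-regular. Then with probability at least 1 - 2*delta over (X, Z), ||W^T X - W^T Z||_infinity <= C * (log(k/delta))^{1/2} * delta^{1/2} + C * (log(k/delta))^{3/4} * eps^{1/2}, for some universal constant C. -/
/-!
Coordinate `p` of `Wᵀ X - Wᵀ Z` is `2 ∑_{i flipped} W i p * X i`. Given the flip pattern, this is
a Rademacher sum with variance proxy `σ = ∑_{i flipped} (W i p)²`. The flips are independent
Bernoulli(δ), so a Chernoff bound using `∑ i, (W i p)⁴ ≤ ε²` gives `σ ≤ δ + ε √(2M)` except with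
probability `e^{-M}`; when it holds, the Rademacher tail at level `t` is at most
`2 e^{-t²/(8σ)} ≤ e^{-M}` as soon as `t² ≥ 8σ(M + log 2)`. With `M = log (k/δ)` each column fails
with probability at most `2δ/k`, and a union bound over the `k` columns finishes the proof.
-/

open MeasureTheory Finset Real

lemma one_sub_add_mul_exp_le {q : ℝ} (h0 : 0 ≤ q) (h1 : q ≤ 1) (r : ℝ) :
    (1 - q) + q * exp r ≤ exp (q * r + r ^ 2 / 2) := by
  -- Jensen bounds `e^{-qr}` by the mirrored average, and the product of the two averages is
  -- at most `cosh r`.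
  have hconv : exp (-(q * r)) ≤ (1 - q) + q * exp (-r) := by
    simpa [smul_eq_mul] using convexOn_exp.2 (Set.mem_univ 0) (Set.mem_univ (-r))
      (by linarith : 0 ≤ 1 - q) h0 (by ring)
  have hnonneg : 0 ≤ (1 - q) + q * exp r := by nlinarith [mul_nonneg h0 (exp_pos r).le]
  have hprod : ((1 - q) + q * exp r) * ((1 - q) + q * exp (-r)) ≤ cosh r := by
    have hE : exp r * exp (-r) = 1 := by rw [← exp_add]; simp
    have hid : ((1 - q) + q * exp r) * ((1 - q) + q * exp (-r)) =
        1 + 2 * q * (1 - q) * (cosh r - 1) := by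
      rw [cosh_eq]; linear_combination q ^ 2 * hE
    rw [hid]
    have hq : 2 * q * (1 - q) ≤ 1 := by nlinarith [sq_nonneg (2 * q - 1)]
    nlinarith [mul_nonneg (sub_nonneg.2 (one_le_cosh r)) (sub_nonneg.2 hq)]
  calc (1 - q) + q * exp r
      = ((1 - q) + q * exp r) * exp (-(q * r)) * exp (q * r) := by
        rw [mul_assoc, ← exp_add]; simp
    _ ≤ cosh r * exp (q * r) := by gcongr; nlinarith
    _ ≤ exp (r ^ 2 / 2) * exp (q * r) := by gcongr; exact cosh_le_exp_half_sq r
    _ = exp (q * r + r ^ 2 / 2) := by rw [← exp_add, add_comm]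

lemma sum_filter_le_exp_of_mgf_le {α : Type*} [Fintype α] {P f : α → ℝ} (hP : ∀ a, 0 ≤ P a)
    {m σ t : ℝ} (hσ : 0 < σ) (ht : 0 ≤ t)
    (hmgf : ∀ θ, 0 ≤ θ → ∑ a, P a * exp (θ * f a) ≤ exp (θ * m + θ ^ 2 * σ / 2)) :
    ∑ a with m + t ≤ f a, P a ≤ exp (-(t ^ 2 / (2 * σ))) := by
  have hθ : 0 ≤ t / σ := div_nonneg ht hσ.le
  calc ∑ a with m + t ≤ f a, P a
      ≤ ∑ a with m + t ≤ f a, P a * exp (t / σ * f a - t / σ * (m + t)) := by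
        refine sum_le_sum fun a ha => le_mul_of_one_le_right (hP a) (one_le_exp ?_)
        nlinarith [(mem_filter.1 ha).2]
    _ ≤ ∑ a, P a * exp (t / σ * f a) * exp (-(t / σ * (m + t))) := by
        simp_rw [mul_assoc, ← exp_add, ← sub_eq_add_neg]
        exact sum_le_sum_of_subset_of_nonneg (filter_subset _ _)
          fun a _ _ => mul_nonneg (hP a) (exp_pos _).le
    _ ≤ exp (t / σ * m + (t / σ) ^ 2 * σ / 2) * exp (-(t / σ * (m + t))) := by
        rw [← sum_mul]; gcongr; exact hmgf _ hθ
    _ = exp (-(t ^ 2 / (2 * σ))) := by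
        rw [← exp_add]; congr 1; field_simp; ring

lemma sum_filter_mul_le_of_fiber_le {α β : Type*} [Fintype α] [Fintype β] {P : α → ℝ}
    {Q : β → ℝ} (hP : ∀ a, 0 ≤ P a) (hP1 : ∑ a, P a ≤ 1) (hQ : ∀ b, 0 ≤ Q b)
    (hQ1 : ∑ b, Q b ≤ 1) (B : α → β → Prop) [∀ a b, Decidable (B a b)] (A : β → Prop)
    [DecidablePred A] {ε : ℝ} (hε : 0 ≤ ε) (hB : ∀ b, ¬ A b → ∑ a with B a b, P a ≤ ε) :
    ∑ ω : α × β with B ω.1 ω.2, P ω.1 * Q ω.2 ≤ ∑ b with A b, Q b + ε := by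
  calc ∑ ω : α × β with B ω.1 ω.2, P ω.1 * Q ω.2
      = ∑ b, Q b * ∑ a with B a b, P a := by
        rw [sum_filter, Fintype.sum_prod_type, sum_comm]
        refine sum_congr rfl fun b _ => ?_
        rw [sum_filter, mul_sum]
        exact sum_congr rfl fun a _ => by split_ifs <;> ring
    _ ≤ ∑ b, ((if A b then Q b else 0) + Q b * ε) := by
        refine sum_le_sum fun b _ => ?_
        split_ifs with h
        · have hfib : ∑ a with B a b, P a ≤ 1 :=
            (sum_le_sum_of_subset_of_nonneg (filter_subset _ _) fun a _ _ => hP a).trans hP1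
          nlinarith [hQ b, mul_le_mul_of_nonneg_left hfib (hQ b)]
        · simpa using mul_le_mul_of_nonneg_left (hB b h) (hQ b)
    _ ≤ ∑ b with A b, Q b + ε := by
        rw [sum_add_distrib, ← sum_mul, ← sum_filter]
        gcongr
        exact mul_le_of_le_one_left hε hQ1

lemma measure_eq_ofReal_sum {Ω : Type*} [Fintype Ω] [MeasurableSpace Ω]
    [MeasurableSingletonClass Ω] {μ : Measure Ω} {P : Ω → ℝ} (hP : ∀ ω, 0 ≤ P ω)
    (hμ : ∀ ω, μ {ω} = ENNReal.ofReal (P ω)) (s : Set Ω) [DecidablePred (· ∈ s)] :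
    μ s = ENNReal.ofReal (∑ ω with ω ∈ s, P ω) := by
  rw [ENNReal.ofReal_sum_of_nonneg fun ω _ => hP ω]
  simp_rw [← hμ]
  rw [sum_measure_singleton, coe_filter_univ, Set.ofPred_mem_eq]

lemma ofReal_one_sub_mul_le_measure_iInter {Ω ι : Type*} [MeasurableSpace Ω] [Fintype ι]
    (μ : Measure Ω) [IsProbabilityMeasure μ] {s : ι → Set Ω} {η : ℝ} (hη : 0 ≤ η)
    (h : ∀ i, μ (s i)ᶜ ≤ ENNReal.ofReal η) :
    ENNReal.ofReal (1 - Fintype.card ι * η) ≤ μ (⋂ i, s i) := by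
  have hcompl : μ (⋂ i, s i)ᶜ ≤ ENNReal.ofReal (Fintype.card ι * η) := by
    rw [Set.compl_iInter]
    calc μ (⋃ i, (s i)ᶜ) ≤ ∑ i, μ (s i)ᶜ := measure_iUnion_fintype_le μ _
      _ ≤ ∑ _i : ι, ENNReal.ofReal η := sum_le_sum fun i _ => h i
      _ = ENNReal.ofReal (Fintype.card ι * η) := by
        rw [sum_const, card_univ, nsmul_eq_mul, ENNReal.ofReal_mul (Nat.cast_nonneg _),
          ENNReal.ofReal_natCast]
  calc ENNReal.ofReal (1 - Fintype.card ι * η)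
      = 1 - ENNReal.ofReal (Fintype.card ι * η) := by
        rw [ENNReal.ofReal_sub _ (by positivity), ENNReal.ofReal_one]
    _ ≤ 1 - μ (⋂ i, s i)ᶜ := tsub_le_tsub_left hcompl 1
    _ ≤ μ (⋂ i, s i) := by
        rw [tsub_le_iff_right, ← measure_univ (μ := μ), ← Set.union_compl_self (⋂ i, s i)]
        exact measure_union_le _ _

def spin (b : Bool) : ℝ := if b then 1 else -1

/-- The mass function of independent Bernoulli(`q`) coordinates; `q = 2⁻¹` is the uniform
distribution on `ι → Bool`. -/
noncomputable def bernoulliWeight {ι : Type*} [Fintype ι] (q : ℝ) (x : ι → Bool) : ℝ :=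
  ∏ i, if x i then q else 1 - q

section Cube

variable {ι : Type*} [Fintype ι]

lemma bernoulliWeight_nonneg {q : ℝ} (h0 : 0 ≤ q) (h1 : q ≤ 1) (x : ι → Bool) :
    0 ≤ bernoulliWeight q x :=
  prod_nonneg fun i _ => by split_ifs <;> linarith

lemma sum_mul_spin_sub_sum_mul_flip (w : ι → ℝ) (x z : ι → Bool) :
    ∑ i, w i * spin (x i) - ∑ i, w i * (if z i then -spin (x i) else spin (x i)) =
      2 * ∑ i, (if z i then w i else 0) * spin (x i) := by
  rw [← sum_sub_distrib, mul_sum]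
  exact sum_congr rfl fun i _ => by split_ifs <;> ring

variable [DecidableEq ι]

lemma sum_bernoulliWeight_mul_prod (q : ℝ) (g : ι → Bool → ℝ) :
    ∑ x, bernoulliWeight q x * ∏ i, g i (x i) = ∏ i, ((1 - q) * g i false + q * g i true) := by
  simp only [bernoulliWeight, ← prod_mul_distrib]
  rw [← Fintype.prod_sum fun i b => (if b then q else 1 - q) * g i b]
  simp [add_comm]

lemma sum_bernoulliWeight (q : ℝ) : ∑ x : ι → Bool, bernoulliWeight q x = 1 := by
  simpa using sum_bernoulliWeight_mul_prod (ι := ι) q fun _ _ => 1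

lemma sum_bernoulliWeight_mul_exp (q : ℝ) (f : ι → Bool → ℝ) :
    ∑ x, bernoulliWeight q x * exp (∑ i, f i (x i)) =
      ∏ i, ((1 - q) * exp (f i false) + q * exp (f i true)) := by
  simp only [exp_sum]
  exact sum_bernoulliWeight_mul_prod q fun i b => exp (f i b)

lemma sum_bernoulliWeight_half_mul_exp_spin_le (a : ι → ℝ) (θ : ℝ) :
    ∑ x, bernoulliWeight 2⁻¹ x * exp (θ * ∑ i, a i * spin (x i)) ≤
      exp (θ ^ 2 * (∑ i, a i ^ 2) / 2) := by
  simp_rw [mul_sum _ _ θ]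
  rw [sum_bernoulliWeight_mul_exp 2⁻¹ fun i b => θ * (a i * spin b)]
  calc ∏ i, ((1 - 2⁻¹) * exp (θ * (a i * spin false)) + 2⁻¹ * exp (θ * (a i * spin true)))
      = ∏ i, cosh (θ * a i) := by
        refine prod_congr rfl fun i _ => ?_
        simp only [spin, cosh_eq, Bool.false_eq_true, if_true, if_false]; ring_nf
    _ ≤ ∏ i, exp ((θ * a i) ^ 2 / 2) :=
        prod_le_prod (fun i _ => (cosh_pos _).le) fun i _ => cosh_le_exp_half_sq _
    _ = exp (θ ^ 2 * (∑ i, a i ^ 2) / 2) := by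
        rw [← exp_sum, mul_sum, sum_div]; simp [mul_pow]

lemma sum_bernoulliWeight_mul_exp_sum_ite_le {q : ℝ} (h0 : 0 ≤ q) (h1 : q ≤ 1) (c : ι → ℝ) (θ : ℝ) :
    ∑ z, bernoulliWeight q z * exp (θ * ∑ i, if z i then c i else 0) ≤
      exp (θ * (q * ∑ i, c i) + θ ^ 2 * (∑ i, c i ^ 2) / 2) := by
  simp_rw [mul_sum _ _ θ]
  rw [sum_bernoulliWeight_mul_exp q fun i b => θ * if b then c i else 0]
  calc ∏ i, ((1 - q) * exp (θ * if false then c i else 0) +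
        q * exp (θ * if true then c i else 0))
      = ∏ i, ((1 - q) + q * exp (θ * c i)) := by simp
    _ ≤ ∏ i, exp (q * (θ * c i) + (θ * c i) ^ 2 / 2) :=
        prod_le_prod (fun i _ => by nlinarith [exp_pos (θ * c i)])
          fun i _ => one_sub_add_mul_exp_le h0 h1 _
    _ = exp (θ * (q * ∑ i, c i) + θ ^ 2 * (∑ i, c i ^ 2) / 2) := by
        rw [← exp_sum, sum_add_distrib, mul_sum, mul_sum, mul_sum, sum_div]
        congr 1; congr 1 <;> refine sum_congr rfl fun i _ => by ring

lemma sum_bernoulliWeight_half_filter_abs_spin_le (a : ι → ℝ) {σ t : ℝ} (hσ : 0 < σ)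
    (ha : ∑ i, a i ^ 2 ≤ σ) (ht : 0 ≤ t) :
    ∑ x with t ≤ |∑ i, a i * spin (x i)|, bernoulliWeight 2⁻¹ x ≤
      2 * exp (-(t ^ 2 / (2 * σ))) := by
  have hP := bernoulliWeight_nonneg (ι := ι) (by norm_num : (0:ℝ) ≤ 2⁻¹) (by norm_num)
  have tail : ∀ b : ι → ℝ, ∑ i, b i ^ 2 ≤ σ →
      ∑ x with t ≤ ∑ i, b i * spin (x i), bernoulliWeight 2⁻¹ x ≤
        exp (-(t ^ 2 / (2 * σ))) := fun b hb => by
    simpa using sum_filter_le_exp_of_mgf_le hP hσ ht (m := 0) fun θ _ =>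
      (sum_bernoulliWeight_half_mul_exp_spin_le b θ).trans (by rw [mul_zero, zero_add]; gcongr)
  have hneg : ∀ x : ι → Bool, ∑ i, -a i * spin (x i) = -∑ i, a i * spin (x i) := by
    intro x; simp [neg_mul]
  calc ∑ x with t ≤ |∑ i, a i * spin (x i)|, bernoulliWeight 2⁻¹ x
      ≤ ∑ x with t ≤ ∑ i, a i * spin (x i), bernoulliWeight 2⁻¹ x +
          ∑ x with t ≤ ∑ i, -a i * spin (x i), bernoulliWeight 2⁻¹ x := by
        simp only [sum_filter, hneg, ← sum_add_distrib]
        refine sum_le_sum fun x _ => ?_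
        have := hP x
        rcases abs_cases (∑ i, a i * spin (x i)) with ⟨h, _⟩ | ⟨h, _⟩ <;> split_ifs <;> linarith
    _ ≤ 2 * exp (-(t ^ 2 / (2 * σ))) := by
        rw [two_mul]
        exact add_le_add (tail a ha) (tail _ (by simpa using ha))

lemma sum_filter_lt_abs_perturbation_le {w : ι → ℝ} {q ε M thr : ℝ} (hq0 : 0 ≤ q) (hq1 : q ≤ 1)
    (hε : 0 < ε) (hM : 0 < M) (hw : ∑ i, w i ^ 2 = 1) (hreg : ∑ i, w i ^ 4 ≤ ε ^ 2)
    (hthr : 0 ≤ thr) (h : 8 * (q + ε * √(2 * M)) * (M + log 2) ≤ thr ^ 2) :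
    ∑ ω : (ι → Bool) × (ι → Bool) with
        thr < |2 * ∑ i, (if ω.2 i then w i else 0) * spin (ω.1 i)|,
      bernoulliWeight 2⁻¹ ω.1 * bernoulliWeight q ω.2 ≤ 2 * exp (-M) := by
  set v := q + ε * √(2 * M)
  have hv : 0 < v := by positivity
  have hflip : ∑ z with v ≤ ∑ i, (if z i then w i ^ 2 else 0),
      bernoulliWeight q z ≤ exp (-M) := by
    have hreg' : ∑ i, (w i ^ 2) ^ 2 ≤ ε ^ 2 := by simpa only [← pow_mul] using hreg
    have hmgf : ∀ θ, 0 ≤ θ → ∑ z, bernoulliWeight q z * exp (θ * ∑ i, if z i then w i ^ 2 else 0)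
        ≤ exp (θ * q + θ ^ 2 * ε ^ 2 / 2) := fun θ _ =>
      (sum_bernoulliWeight_mul_exp_sum_ite_le hq0 hq1 (w · ^ 2) θ).trans
        (by rw [hw, mul_one]; gcongr)
    convert sum_filter_le_exp_of_mgf_le (bernoulliWeight_nonneg hq0 hq1) (pow_pos hε 2)
      (t := ε * √(2 * M)) (by positivity) hmgf using 2
    rw [mul_pow, sq_sqrt (by positivity)]; field_simp
  have hrad : ∀ z : ι → Bool, ¬ v ≤ ∑ i, (if z i then w i ^ 2 else 0) →
      ∑ x with thr < |2 * ∑ i, (if z i then w i else 0) * spin (x i)|, bernoulliWeight 2⁻¹ x ≤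
        exp (-M) := by
    intro z hz
    have ha : ∑ i, (if z i then w i else 0) ^ 2 ≤ v := by
      simp only [ite_pow, zero_pow two_ne_zero]; exact (not_le.1 hz).le
    calc ∑ x with thr < |2 * ∑ i, (if z i then w i else 0) * spin (x i)|, bernoulliWeight 2⁻¹ x
        ≤ ∑ x with thr / 2 ≤ |∑ i, (if z i then w i else 0) * spin (x i)|,
            bernoulliWeight 2⁻¹ x := by
          refine sum_le_sum_of_subset_of_nonneg (monotone_filter_right _ fun x _ hx => ?_)
            fun x _ _ => bernoulliWeight_nonneg (by norm_num) (by norm_num) x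
          rw [abs_mul, abs_two] at hx; linarith
      _ ≤ 2 * exp (-((thr / 2) ^ 2 / (2 * v))) :=
          sum_bernoulliWeight_half_filter_abs_spin_le _ hv ha (by positivity)
      _ ≤ 2 * exp (-(M + log 2)) := by
          gcongr
          rw [le_div_iff₀ (by positivity)]; linarith
      _ = exp (-M) := by rw [neg_add, exp_add, exp_neg (log 2), exp_log two_pos]; ring
  calc _ ≤ ∑ z with v ≤ ∑ i, (if z i then w i ^ 2 else 0), bernoulliWeight q z + exp (-M) :=
        sum_filter_mul_le_of_fiber_le (bernoulliWeight_nonneg (by norm_num) (by norm_num))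
          (sum_bernoulliWeight _).le (bernoulliWeight_nonneg hq0 hq1) (sum_bernoulliWeight _).le
          _ _ (exp_pos _).le hrad
    _ ≤ 2 * exp (-M) := by linarith

lemma uniformOfFintype_prod_pi_bernoulli_singleton {q : ℝ} (hq : 0 ≤ q) (h : q.toNNReal ≤ 1)
    (x z : ι → Bool) :
    ((PMF.uniformOfFintype (ι → Bool)).toMeasure.prod
        (Measure.pi fun _ : ι => (PMF.bernoulli q.toNNReal h).toMeasure)) {(x, z)} =
      ENNReal.ofReal (bernoulliWeight 2⁻¹ x * bernoulliWeight q z) := by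
  have hq1 : q ≤ 1 := by simpa using h
  have hx : (PMF.uniformOfFintype (ι → Bool)).toMeasure {x} =
      ENNReal.ofReal (bernoulliWeight 2⁻¹ x) := by
    have half : (1:ℝ) - 2⁻¹ = 2⁻¹ := by norm_num
    rw [PMF.toMeasure_apply_singleton _ _ (measurableSet_singleton _), PMF.uniformOfFintype_apply]
    simp [bernoulliWeight, half, ENNReal.ofReal_inv_of_pos, ENNReal.inv_pow]
  have hz : Measure.pi (fun _ : ι => (PMF.bernoulli q.toNNReal h).toMeasure) {z} =
      ENNReal.ofReal (bernoulliWeight q z) := by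
    rw [← Set.univ_pi_singleton z, Measure.pi_pi, bernoulliWeight,
      ENNReal.ofReal_prod_of_nonneg fun i _ => by split_ifs <;> linarith]
    refine prod_congr rfl fun i _ => ?_
    rw [PMF.toMeasure_apply_singleton _ _ (measurableSet_singleton _), PMF.bernoulli_apply]
    cases z i
    · simp [ENNReal.ofReal_sub, hq]; rfl
    · rfl
  rw [← Set.singleton_prod_singleton, Measure.prod_prod, hx, hz,
    ENNReal.ofReal_mul (bernoulliWeight_nonneg (by norm_num) (by norm_num) _)]

end Cube

lemma threshold_sq_le {M δ ε : ℝ} (hM : log 2 ≤ M) (hδ : 0 ≤ δ) (hε : 0 ≤ ε) :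
    8 * (δ + ε * √(2 * M)) * (M + log 2) ≤
      (5 * M ^ ((1:ℝ) / 2) * δ ^ ((1:ℝ) / 2) + 5 * M ^ ((3:ℝ) / 4) * ε ^ ((1:ℝ) / 2)) ^ 2 := by
  have hM0 : 0 ≤ M := (log_nonneg one_le_two).trans hM
  set r := M ^ ((1:ℝ) / 4)
  set d := δ ^ ((1:ℝ) / 2)
  set e := ε ^ ((1:ℝ) / 2)
  have hr : 0 ≤ r := rpow_nonneg hM0 _
  have hd : 0 ≤ d := rpow_nonneg hδ _
  have he : 0 ≤ e := rpow_nonneg hε _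
  have hpow : ∀ {x : ℝ}, 0 ≤ x → ∀ (a : ℝ) (n : ℕ), x ^ (a * n) = (x ^ a) ^ n :=
    fun hx a n => rpow_mul_natCast hx a n
  have hM4 : M = r ^ 4 := by rw [← hpow hM0]; norm_num
  have hM2 : M ^ ((1:ℝ) / 2) = r ^ 2 := by rw [← hpow hM0]; norm_num
  have hM3 : M ^ ((3:ℝ) / 4) = r ^ 3 := by rw [← hpow hM0]; norm_num
  have hδ2 : δ = d ^ 2 := by rw [← hpow hδ]; norm_num
  have hε2 : ε = e ^ 2 := by rw [← hpow hε]; norm_num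
  have hsqrt : √(2 * M) ≤ 3 / 2 * r ^ 2 := by
    rw [sqrt_le_left (by positivity), hM4]; nlinarith [pow_nonneg hr 4]
  have hlog : M + log 2 ≤ 2 * M := by linarith
  rw [hM2, hM3]
  calc 8 * (δ + ε * √(2 * M)) * (M + log 2)
      ≤ 8 * (δ + ε * (3 / 2 * r ^ 2)) * (2 * M) := by gcongr
    _ = 16 * r ^ 4 * d ^ 2 + 24 * r ^ 6 * e ^ 2 := by rw [hδ2, hε2, hM4]; ring
    _ ≤ (5 * r ^ 2 * d + 5 * r ^ 3 * e) ^ 2 := by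
        nlinarith [mul_nonneg (mul_nonneg (pow_nonneg hr 5) hd) he, pow_nonneg hr 4,
          pow_nonneg hr 6, mul_nonneg (pow_nonneg hr 4) (sq_nonneg d),
          mul_nonneg (pow_nonneg hr 6) (sq_nonneg e)]

theorem stmt_9 :
    ∃ C : ℝ, 0 < C ∧
      ∀ (n k : ℕ) (δ eps : ℝ) (hδ : δ ∈ Set.Ioo (0:ℝ) 1) (heps : 0 < eps)
        (W : Fin n → Fin k → ℝ)
        (hunit : ∀ p, ∑ i, (W i p) ^ 2 = 1)
        (hreg : ∀ p, ∑ i, (W i p) ^ 4 ≤ eps ^ 2),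
        ENNReal.ofReal (1 - 2 * δ) ≤
          (((PMF.uniformOfFintype (Fin n → Bool)).toMeasure).prod
            (Measure.pi fun _ : Fin n =>
              (PMF.bernoulli (Real.toNNReal δ)
                (Real.toNNReal_le_one.mpr hδ.2.le)).toMeasure))
          {ω | ∀ p,
            |(∑ i, W i p * (if ω.1 i then (1:ℝ) else -1)) -
              ∑ i, W i p * (if ω.2 i then -(if ω.1 i then (1:ℝ) else -1)
                            else (if ω.1 i then (1:ℝ) else -1))| ≤
              C * Real.log (k / δ) ^ ((1:ℝ)/2) * δ ^ ((1:ℝ)/2) +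
              C * Real.log (k / δ) ^ ((3:ℝ)/4) * eps ^ ((1:ℝ)/2)} := by
  classical
  refine ⟨5, by norm_num, fun n k δ eps hδ heps W hunit hreg => ?_⟩
  obtain ⟨hδ0, hδ1⟩ := hδ
  rcases le_or_gt (1 / 2) δ with hδ2 | hδ2
  · simp [ENNReal.ofReal_of_nonpos (by linarith : 1 - 2 * δ ≤ 0)]
  rcases Nat.eq_zero_or_pos k with rfl | hk
  · simpa using hδ0.le
  have hkδ : 2 ≤ (k : ℝ) / δ := by
    rw [le_div_iff₀ hδ0]; linarith [(Nat.one_le_cast (α := ℝ)).2 hk]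
  have hexp : 2 * exp (-log (k / δ)) = 2 * δ / k := by
    rw [exp_neg, exp_log (by linarith), inv_div, mul_div_assoc]
  set M := log (k / δ)
  have hM : log 2 ≤ M := log_le_log two_pos hkδ
  have hM0 : 0 < M := (log_pos one_lt_two).trans_le hM
  have hthr :
      0 ≤ 5 * M ^ ((1:ℝ) / 2) * δ ^ ((1:ℝ) / 2) + 5 * M ^ ((3:ℝ) / 4) * eps ^ ((1:ℝ) / 2) := by
    have := rpow_nonneg hM0.le ((1:ℝ) / 2)
    have := rpow_nonneg hM0.le ((3:ℝ) / 4)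
    positivity
  have hcard : 1 - 2 * δ = 1 - Fintype.card (Fin k) * (2 * δ / k) := by
    rw [Fintype.card_fin]; field_simp
  rw [hcard, Set.ofPred_forall]
  refine ofReal_one_sub_mul_le_measure_iInter _ (by positivity) fun p => ?_
  rw [measure_eq_ofReal_sum (fun ω => mul_nonneg (bernoulliWeight_nonneg (by norm_num)
    (by norm_num) ω.1) (bernoulliWeight_nonneg hδ0.le hδ1.le ω.2))
    (fun ω => uniformOfFintype_prod_pi_bernoulli_singleton hδ0.le _ ω.1 ω.2), ← hexp]
  refine ENNReal.ofReal_le_ofReal (le_of_eq_of_le ?_ (sum_filter_lt_abs_perturbation_le hδ0.le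
    hδ1.le heps hM0 (hunit p) (hreg p) hthr (threshold_sq_le hM hδ0.le heps.le)))
  refine sum_congr (filter_congr fun ω _ => ?_) fun _ _ => rfl
  rw [Set.mem_compl_iff, Set.mem_ofPred_eq, not_le, ← sum_mul_spin_sub_sum_mul_flip]
  rfl
end
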